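/- arXiv:2211.16086 — 4 statements merged into one kernel-verified Lean document; each statement's English description precedes it below -/
import Mathlib

section
/- For every λ > 0 and every c with 0 < c < 1/(1 + max(0, log λ)), the sum (1/n)·∑_{m=1}^{⌊c log n⌋} m²·(eλ)^{m+1} tends to 0 as n → ∞. -/
open Filter

/-- For every `λ > 0` and every `0 < c < 1/(1 + max(0, log λ))`, the sum
`(1/n)·∑_{m=1}^{⌊c log n⌋} m²·(eλ)^{m+1}` tends to `0` as `n → ∞`. -/
theorem sum_cycles_tendsto_zero (l : ℝ) (hl : 0 < l) (c : ℝ) (hc : 0 < c)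
    (hc' : c < 1 / (1 + max 0 (Real.log l))) :
    Tendsto (fun n : ℕ =>
        (1 / (n : ℝ)) * ∑ m ∈ Finset.Icc 1 ⌊c * Real.log n⌋₊,
          (m : ℝ) ^ 2 * (Real.exp 1 * l) ^ (m + 1))
      atTop (nhds 0) := by
  set a : ℝ := 1 + max 0 (Real.log l) with ha_def
  have ha : 0 < a := by positivity
  have hca : a * c < 1 := by
    rw [lt_div_iff₀ ha] at hc'
    linarith
  have hε : 0 < 1 - a * c := by linarith
  have hel : Real.exp 1 * l ≤ Real.exp a := by
    rw [← Real.exp_log hl, ← Real.exp_add]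
    exact Real.exp_le_exp.2 (by simp [ha_def, le_max_right])
  have hel0 : 0 ≤ Real.exp 1 * l := by positivity
  have hB1 : (1 : ℝ) ≤ Real.exp a := Real.one_le_exp ha.le
  -- upper bound function
  set g : ℕ → ℝ := fun n => Real.exp a * c ^ 3 *
      ((Real.log n) ^ (3 : ℝ) * (n : ℝ) ^ (a * c - 1)) with hg_def
  have hg0 : Tendsto g atTop (nhds 0) := by
    have h1 : Tendsto (fun x : ℝ => (Real.log x) ^ (3 : ℝ) / x ^ (1 - a * c))
        atTop (nhds 0) :=
      (isLittleO_log_rpow_rpow_atTop 3 hε).tendsto_div_nhds_zero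
    have h2 : Tendsto (fun x : ℝ => (Real.log x) ^ (3 : ℝ) * x ^ (a * c - 1))
        atTop (nhds 0) := by
      refine h1.congr' ?_
      filter_upwards [eventually_gt_atTop 0] with x hx
      rw [div_eq_mul_inv, ← Real.rpow_neg hx.le]
      ring_nf
    have h3 := h2.comp tendsto_natCast_atTop_atTop (α := ℕ)
    have := (h3.const_mul (Real.exp a * c ^ 3))
    simpa [hg_def, mul_assoc] using this
  refine tendsto_of_tendsto_of_tendsto_of_le_of_le' tendsto_const_nhds hg0 ?_ ?_
  · filter_upwards [eventually_ge_atTop 1] with n hn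
    have : (0 : ℝ) < n := by exact_mod_cast hn
    positivity
  · filter_upwards [eventually_ge_atTop 2] with n hn
    have hn0 : (0 : ℝ) < n := by positivity
    have hlogn : 0 ≤ Real.log n := Real.log_natCast_nonneg n
    set M : ℕ := ⌊c * Real.log n⌋₊ with hM_def
    have hMle : (M : ℝ) ≤ c * Real.log n := Nat.floor_le (by positivity)
    have hterm : ∀ m ∈ Finset.Icc 1 M,
        (m : ℝ) ^ 2 * (Real.exp 1 * l) ^ (m + 1)
          ≤ (M : ℝ) ^ 2 * Real.exp a ^ (M + 1) := by
      intro m hm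
      obtain ⟨hm1, hm2⟩ := Finset.mem_Icc.1 hm
      have h1 : (m : ℝ) ^ 2 ≤ (M : ℝ) ^ 2 := by
        have : (m : ℝ) ≤ M := by exact_mod_cast hm2
        gcongr
      have h2 : (Real.exp 1 * l) ^ (m + 1) ≤ Real.exp a ^ (m + 1) :=
        pow_le_pow_left₀ hel0 hel _
      have h3 : Real.exp a ^ (m + 1) ≤ Real.exp a ^ (M + 1) :=
        pow_le_pow_right₀ hB1 (by omega)
      calc (m : ℝ) ^ 2 * (Real.exp 1 * l) ^ (m + 1)
          ≤ (M : ℝ) ^ 2 * (Real.exp 1 * l) ^ (m + 1) := by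
            apply mul_le_mul_of_nonneg_right h1 (by positivity)
        _ ≤ (M : ℝ) ^ 2 * Real.exp a ^ (M + 1) := by
            apply mul_le_mul_of_nonneg_left (h2.trans h3) (by positivity)
    have hsum : ∑ m ∈ Finset.Icc 1 M, (m : ℝ) ^ 2 * (Real.exp 1 * l) ^ (m + 1)
        ≤ (M : ℝ) * ((M : ℝ) ^ 2 * Real.exp a ^ (M + 1)) := by
      calc ∑ m ∈ Finset.Icc 1 M, (m : ℝ) ^ 2 * (Real.exp 1 * l) ^ (m + 1)
          ≤ (Finset.Icc 1 M).card • ((M : ℝ) ^ 2 * Real.exp a ^ (M + 1)) :=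
            Finset.sum_le_card_nsmul _ _ _ hterm
        _ = (M : ℝ) * ((M : ℝ) ^ 2 * Real.exp a ^ (M + 1)) := by
            simp [Nat.card_Icc, nsmul_eq_mul]
    -- now bound exp a ^ (M+1) ≤ exp a * n ^ (a*c)
    have hpow : Real.exp a ^ (M + 1) ≤ Real.exp a * (n : ℝ) ^ (a * c) := by
      rw [← Real.exp_nat_mul]
      have : (↑(M + 1) : ℝ) * a ≤ a * (c * Real.log n) + a := by
        push_cast
        nlinarith
      calc Real.exp (↑(M + 1) * a) ≤ Real.exp (a * (c * Real.log n) + a) :=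
            Real.exp_le_exp.2 this
        _ = Real.exp a * (n : ℝ) ^ (a * c) := by
            rw [Real.exp_add, Real.rpow_def_of_pos hn0]
            ring_nf
    have hM3 : (M : ℝ) * (M : ℝ) ^ 2 ≤ (c * Real.log n) ^ 3 := by
      calc (M : ℝ) * (M : ℝ) ^ 2 = (M : ℝ) ^ 3 := by ring
        _ ≤ (c * Real.log n) ^ 3 := by gcongr <;> positivity
    have key : (1 / (n : ℝ)) * ∑ m ∈ Finset.Icc 1 M,
        (m : ℝ) ^ 2 * (Real.exp 1 * l) ^ (m + 1)
        ≤ (1 / (n : ℝ)) * ((c * Real.log n) ^ 3 * (Real.exp a * (n : ℝ) ^ (a * c))) := by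
      apply mul_le_mul_of_nonneg_left _ (by positivity)
      calc ∑ m ∈ Finset.Icc 1 M, (m : ℝ) ^ 2 * (Real.exp 1 * l) ^ (m + 1)
          ≤ (M : ℝ) * ((M : ℝ) ^ 2 * Real.exp a ^ (M + 1)) := hsum
        _ ≤ (c * Real.log n) ^ 3 * (Real.exp a * (n : ℝ) ^ (a * c)) := by
            calc (M : ℝ) * ((M : ℝ) ^ 2 * Real.exp a ^ (M + 1))
                = ((M : ℝ) * (M : ℝ) ^ 2) * Real.exp a ^ (M + 1) := by ring
              _ ≤ (c * Real.log n) ^ 3 * (Real.exp a * (n : ℝ) ^ (a * c)) := by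
                  apply mul_le_mul hM3 hpow (by positivity) (by positivity)
    refine key.trans (le_of_eq ?_)
    have hrw : (Real.log n) ^ (3 : ℝ) = (Real.log n) ^ (3 : ℕ) := by
      rw [show (3:ℝ) = ((3:ℕ):ℝ) by norm_cast, Real.rpow_natCast]
    have hsplit : (n : ℝ) ^ (a * c - 1) = (n : ℝ) ^ (a * c) / n := by
      rw [Real.rpow_sub hn0, Real.rpow_one]
    rw [hg_def]
    simp only [hrw, hsplit]
    push_cast
    ring
end

section
/- Fix λ ∈ (0,1) and set I_λ = λ − 1 − log λ. The expected number of vertices of G(n, λ/n) lying in a connected component of size at most 2·I_λ^{-1}·log n that contains a cycle is O(1) as n → ∞. Consequently, for every ε > 0, a.a.s. all connected components of G(n, λ/n) of size larger than ε·log n are trees. -/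
open MeasureTheory Filter
open scoped ENNReal


/-- The Erdős–Rényi measure: each potential edge (element of `Sym2 (Fin n)`) is present
independently with probability `p`. -/
noncomputable def erMeasure (n : ℕ) (p : ℝ) : Measure (Sym2 (Fin n) → Bool) :=
  Measure.pi fun _ =>
    (PMF.bernoulli (min (Real.toNNReal p) 1) (min_le_right _ _)).toMeasure

/-- The random graph associated to a configuration of edge indicators. -/
def erGraph {n : ℕ} (ω : Sym2 (Fin n) → Bool) : SimpleGraph (Fin n) where
  Adj u v := u ≠ v ∧ ω s(u, v) = true
  symm := ⟨fun u v h => ⟨h.1.symm, by rw [Sym2.eq_swap]; exact h.2⟩⟩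
  loopless := ⟨fun u h => h.1 rfl⟩

/-- The connected component of `u` (as a vertex set). -/
def comp {n : ℕ} (ω : Sym2 (Fin n) → Bool) (u : Fin n) : Set (Fin n) :=
  {v | (erGraph ω).Reachable u v}

namespace ErAux

open SimpleGraph SimpleGraph.Walk

variable {V : Type*} {G : SimpleGraph V}

lemma support_eq_map {u v : V} (p : G.Walk u v) :
    p.support = (List.range (p.length + 1)).map p.getVert := by
  induction p with
  | nil => simp [List.range_succ]
  | cons h p ih =>
      rw [support_cons, length_cons, List.range_succ_eq_map, List.map_cons, List.map_map, ih]
      rfl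

lemma support_tail_eq {u v : V} (p : G.Walk u v) :
    p.support.tail = (List.range p.length).map (fun i => p.getVert (i + 1)) := by
  rw [support_eq_map, List.range_succ_eq_map, List.map_cons, List.tail_cons, List.map_map]
  rfl

lemma getVert_mem_support' {u v : V} (p : G.Walk u v) (i : ℕ) : p.getVert i ∈ p.support := by
  rcases le_or_gt i p.length with h | h
  · rw [support_eq_map]
    exact List.mem_map_of_mem (List.mem_range.2 (by omega))
  · rw [p.getVert_of_length_le h.le]
    exact p.end_mem_support

lemma getVert_mem_support_tail {u v : V} (p : G.Walk u v) {i : ℕ} (h1 : 1 ≤ i)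
    (h2 : i ≤ p.length) : p.getVert i ∈ p.support.tail := by
  rw [support_tail_eq]
  exact List.mem_map.2 ⟨i - 1, List.mem_range.2 (by omega), by congr 1; omega⟩

lemma inj_of_nodup_map_range {α : Type*} {f : ℕ → α} {m : ℕ}
    (h : ((List.range m).map f).Nodup)
    {i k : ℕ} (hi : i < m) (hk : k < m) (hf : f i = f k) : i = k :=
  ((List.nodup_map_iff_inj_on List.nodup_range).mp h) i (List.mem_range.2 hi) k
    (List.mem_range.2 hk) hf

lemma getVert_inj_of_isPath {u v : V} {p : G.Walk u v} (hp : p.IsPath) {i k : ℕ}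
    (hi : i ≤ p.length) (hk : k ≤ p.length) (h : p.getVert i = p.getVert k) : i = k := by
  have hn := hp.support_nodup
  rw [support_eq_map] at hn
  exact inj_of_nodup_map_range hn (by omega) (by omega) h

lemma getVert_inj_of_tail_nodup {u v : V} {p : G.Walk u v} (hp : p.support.tail.Nodup)
    {i k : ℕ} (hi1 : 1 ≤ i) (hi : i ≤ p.length) (hk1 : 1 ≤ k) (hk : k ≤ p.length)
    (h : p.getVert i = p.getVert k) : i = k := by
  rw [support_tail_eq] at hp
  have h' : p.getVert ((i - 1) + 1) = p.getVert ((k - 1) + 1) := by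
    rw [Nat.sub_add_cancel hi1, Nat.sub_add_cancel hk1]; exact h
  have := inj_of_nodup_map_range hp (by omega : i - 1 < p.length)
    (by omega : k - 1 < p.length) h'
  omega


lemma exists_lollipop {n : ℕ} {ω : Sym2 (Fin n) → Bool} {u : Fin n}
    (h : ¬ ((erGraph ω).induce (comp ω u)).IsAcyclic) :
    ∃ s j, ∃ g : ℕ → Fin n, g 0 = u ∧
      (∀ i k, i ≤ s → k ≤ s → g i = g k → i = k) ∧
      (∀ i, i < s → ω s(g i, g (i + 1)) = true) ∧
      ω s(g s, g j) = true ∧ j + 2 ≤ s ∧ s < n := by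
  classical
  rw [SimpleGraph.IsAcyclic] at h
  push_neg at h
  obtain ⟨v, c, hc⟩ := h
  let G := erGraph ω
  let φ := SimpleGraph.Embedding.induce (G := G) (comp ω u)
  have hφinj : Function.Injective φ.toHom := φ.injective
  let c1 := c.map φ.toHom
  have hc1 : c1.IsCycle := hc.map hφinj
  have hv0 : G.Reachable u (φ.toHom v) := v.2
  have hex : ∃ k, ∃ x, x ∈ c1.support ∧ ∃ q : G.Walk u x, q.length = k := by
    obtain ⟨q⟩ := hv0
    exact ⟨q.length, φ.toHom v, c1.start_mem_support, q, rfl⟩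
  obtain ⟨w, hwc, q, hqlen⟩ := Nat.find_spec hex
  set k0 := Nat.find hex with hk0
  have hmin : ∀ x ∈ c1.support, ∀ t : G.Walk u x, k0 ≤ t.length := by
    intro x hx t
    by_contra hlt
    push_neg at hlt
    exact Nat.find_min hex hlt ⟨x, hx, t, rfl⟩
  set q' := q.bypass with hq'
  have hq'path : q'.IsPath := q.bypass_isPath
  have hq'len : q'.length = k0 := le_antisymm (hqlen ▸ q.length_bypass_le) (hmin w hwc q')
  have hkey : ∀ x ∈ q'.support, x ∈ c1.support → x = w := by
    intro x hxq hxc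
    by_contra hne
    have hsplit := congrArg Walk.length (q'.take_spec hxq)
    rw [Walk.length_append] at hsplit
    have hdrop : 1 ≤ (q'.dropUntil x hxq).length := by
      rcases Nat.eq_zero_or_pos (q'.dropUntil x hxq).length with h0 | h1
      · exact absurd (Walk.eq_of_length_eq_zero h0) hne
      · exact h1
    have := hmin x hxc (q'.takeUntil x hxq)
    omega
  set d := c1.rotate w hwc with hd'
  have hd : d.IsCycle := hc1.rotate hwc
  have hL3 : 3 ≤ d.length := hd.three_le_length
  set r := q'.length with hr
  set L := d.length with hL
  set g : ℕ → Fin n := fun i => if i ≤ r then q'.getVert i else d.getVert (i - r) with hgdef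
  have hgpath : ∀ i, i ≤ r → g i = q'.getVert i := by
    intro i hi; simp only [hgdef, if_pos hi]
  have hgr : ∀ i, r ≤ i → g i = d.getVert (i - r) := by
    intro i hi
    rcases eq_or_lt_of_le hi with rfl | hlt
    · simp only [hgdef, if_pos le_rfl, Nat.sub_self, Walk.getVert_zero]
      rw [hr, Walk.getVert_length]
    · simp only [hgdef, if_neg (by omega : ¬ i ≤ r)]
  have hg0 : g 0 = u := by rw [hgpath 0 (Nat.zero_le _), Walk.getVert_zero]
  have hedge : ∀ i, i < r + (L - 1) → ω s(g i, g (i + 1)) = true := by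
    intro i hi
    rcases lt_or_ge i r with h1 | h2
    · rw [hgpath i (by omega), hgpath (i+1) (by omega)]
      exact (q'.adj_getVert_succ (by omega)).2
    · rw [hgr i h2, hgr (i+1) (by omega), (by omega : i + 1 - r = (i - r) + 1)]
      exact (d.adj_getVert_succ (by omega)).2
  have hclose : ω s(g (r + (L - 1)), g r) = true := by
    rw [hgr _ (by omega), hgr r le_rfl, Nat.sub_self, (by omega : r + (L-1) - r = L - 1)]
    have hadj := d.adj_getVert_succ (i := L - 1) (by omega)
    rw [(by omega : L - 1 + 1 = L)] at hadj
    rw [Walk.getVert_zero]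
    rw [hL, Walk.getVert_length] at hadj
    exact hadj.2
  have hmemd : ∀ i, r < i → i ≤ r + (L - 1) → g i ∈ c1.support := by
    intro i h1 h2
    rw [hgr i h1.le]
    have ht : d.getVert (i - r) ∈ d.support.tail :=
      getVert_mem_support_tail d (by omega) (by omega)
    have hrot := Walk.support_rotate c1 w hwc
    rw [← hd'] at hrot
    exact List.mem_of_mem_tail (hrot.mem_iff.mp ht)
  have hcross : ∀ i k, i ≤ r → r < k → k ≤ r + (L - 1) → g i ≠ g k := by
    intro i k hi hk1 hk2 hik
    have hkc : g k ∈ c1.support := hmemd k hk1 hk2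
    have hiq : g i ∈ q'.support := by rw [hgpath i hi]; exact getVert_mem_support' q' i
    have hiw : g i = w := hkey _ hiq (hik ▸ hkc)
    have hgi : q'.getVert i = q'.getVert q'.length := by
      rw [← hgpath i hi, hiw, Walk.getVert_length]
    have hir : i = r := by
      have := getVert_inj_of_isPath hq'path hi le_rfl hgi
      omega
    have hdL : d.getVert (k - r) = d.getVert L := by
      rw [← hgr k (by omega), ← hik, hiw, hL, Walk.getVert_length]
    have := getVert_inj_of_tail_nodup hd.support_nodup (by omega) (by omega) (by omega)
      le_rfl hdL
    omega
  have hginj : ∀ i k, i ≤ r + (L - 1) → k ≤ r + (L - 1) → g i = g k → i = k := by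
    intro i k hi hk hik
    rcases le_or_gt i r with hir | hir <;> rcases le_or_gt k r with hkr | hkr
    · rw [hgpath i hir, hgpath k hkr] at hik
      exact getVert_inj_of_isPath hq'path hir hkr hik
    · exact absurd hik (hcross i k hir hkr hk)
    · exact absurd hik.symm (hcross k i hkr hir hi)
    · rw [hgr i hir.le, hgr k hkr.le] at hik
      have := getVert_inj_of_tail_nodup hd.support_nodup (by omega) (by omega : i - r ≤ L)
        (by omega) (by omega : k - r ≤ L) hik
      omega
  have hsn : r + (L - 1) < n := by
    have hinjF : Function.Injective (fun i : Fin (r + (L - 1) + 1) => g i) := by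
      intro a b hab
      exact Fin.ext (hginj a b (by omega) (by omega) hab)
    have hcard := Fintype.card_le_of_injective _ hinjF
    simp only [Fintype.card_fin] at hcard
    omega
  exact ⟨r + (L - 1), r, g, hg0, hginj, hedge, hclose, by omega, hsn⟩

variable {n : ℕ}

lemma allMeasurable (s : Set (Sym2 (Fin n) → Bool)) : MeasurableSet s := by
  have hsing : ∀ ω : Sym2 (Fin n) → Bool, MeasurableSet {ω} := by
    intro ω
    have : {ω} = ⋂ e, (fun w : Sym2 (Fin n) → Bool => w e) ⁻¹' {ω e} := by
      ext w
      simp [funext_iff]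
    rw [this]
    exact MeasurableSet.iInter fun e => (measurable_pi_apply e) (measurableSet_singleton _)
  have hs : s = ⋃ ω ∈ s, {ω} := by simp
  rw [hs]
  exact MeasurableSet.biUnion (Set.to_countable s) fun ω _ => hsing ω

lemma allMeasurableFun (f : (Sym2 (Fin n) → Bool) → ℝ≥0∞) : Measurable f :=
  fun _ _ => allMeasurable _

lemma erProb (n : ℕ) (p : ℝ) : IsProbabilityMeasure (erMeasure n p) := by
  unfold erMeasure
  infer_instance

lemma measure_event (p : ℝ) (E : Finset (Sym2 (Fin n))) :
    erMeasure n p {ω | ∀ e ∈ E, ω e = true} = (min (ENNReal.ofReal p) 1) ^ E.card := by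
  classical
  set q := min (Real.toNNReal p) 1 with hq
  have hset : {ω : Sym2 (Fin n) → Bool | ∀ e ∈ E, ω e = true}
      = Set.pi Set.univ (fun e => if e ∈ E then ({true} : Set Bool) else Set.univ) := by
    ext ω
    simp only [Set.mem_setOf_eq, Set.mem_pi, Set.mem_univ, forall_true_left]
    constructor
    · intro h e
      by_cases he : e ∈ E
      · simp [he, h e he]
      · simp [he]
    · intro h e he
      have := h e
      rw [if_pos he] at this
      simpa using this
  rw [erMeasure, hset, Measure.pi_pi]
  have hB : ∀ e : Sym2 (Fin n),
      (PMF.bernoulli q (min_le_right _ _)).toMeasure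
        (if e ∈ E then ({true} : Set Bool) else Set.univ) = if e ∈ E then (q : ℝ≥0∞) else 1 := by
    intro e
    by_cases he : e ∈ E
    · rw [if_pos he, if_pos he,
        PMF.toMeasure_apply_singleton _ _ (measurableSet_singleton _), PMF.bernoulli_apply]
      rfl
    · rw [if_neg he, if_neg he]
      exact measure_univ
  rw [Finset.prod_congr rfl (fun e _ => hB e), Finset.prod_ite_mem, Finset.univ_inter,
    Finset.prod_const]
  rw [hq, ENNReal.coe_min, ENNReal.coe_one]
  rfl

def Fz {n s : ℕ} (f : Fin (s + 1) → Fin n) : ℕ → Fin n :=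
  fun i => f ⟨min i s, Nat.lt_succ_of_le (min_le_right _ _)⟩

lemma Fz_eq {s : ℕ} (f : Fin (s + 1) → Fin n) {i : ℕ} (h : i ≤ s) :
    Fz f i = f ⟨i, Nat.lt_succ_of_le h⟩ := by
  unfold Fz
  congr 1
  exact Fin.ext (by simp [Nat.min_eq_left h])

def lolEdges (n s j : ℕ) (f : Fin (s + 1) → Fin n) : Finset (Sym2 (Fin n)) :=
  (Finset.range (s + 1)).image
    (fun i => if i < s then s(Fz f i, Fz f (i + 1)) else s(Fz f s, Fz f j))

def lolEvent (n s j : ℕ) (f : Fin (s + 1) → Fin n) : Set (Sym2 (Fin n) → Bool) :=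
  {ω | ∀ e ∈ lolEdges n s j f, ω e = true}

lemma card_lolEdges {s j : ℕ} {f : Fin (s + 1) → Fin n} (hf : Function.Injective f)
    (hj : j + 2 ≤ s) : (lolEdges n s j f).card = s + 1 := by
  rw [lolEdges, Finset.card_image_of_injOn, Finset.card_range]
  have hFi : ∀ a b : ℕ, a ≤ s → b ≤ s → Fz f a = Fz f b → a = b := by
    intro a b ha hb hab
    rw [Fz_eq f ha, Fz_eq f hb] at hab
    have := hf hab
    simpa using congrArg Fin.val this
  intro a ha b hb hab
  simp only [Finset.coe_range, Set.mem_Iio] at ha hb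
  by_cases h1 : a < s <;> by_cases h2 : b < s
  · simp only [if_pos h1, if_pos h2] at hab
    rcases Sym2.eq_iff.mp hab with ⟨e1, e2⟩ | ⟨e1, e2⟩
    · exact hFi a b (by omega) (by omega) e1
    · have := hFi a (b + 1) (by omega) (by omega) e1
      have := hFi (a + 1) b (by omega) (by omega) e2
      omega
  · simp only [if_pos h1, if_neg h2] at hab
    exfalso
    rcases Sym2.eq_iff.mp hab with ⟨e1, e2⟩ | ⟨e1, e2⟩
    · have := hFi a s (by omega) le_rfl e1
      omega
    · have := hFi a j (by omega) (by omega) e1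
      have := hFi (a + 1) s (by omega) le_rfl e2
      omega
  · simp only [if_neg h1, if_pos h2] at hab
    exfalso
    rcases Sym2.eq_iff.mp hab with ⟨e1, e2⟩ | ⟨e1, e2⟩
    · have := hFi s b le_rfl (by omega) e1
      omega
    · have := hFi s (b + 1) le_rfl (by omega) e1
      have := hFi j b (by omega) (by omega) e2
      omega
  · omega

lemma bad_subset (u : Fin n) :
    {ω : Sym2 (Fin n) → Bool | ¬ ((erGraph ω).induce (comp ω u)).IsAcyclic} ⊆
      ⋃ s ∈ Finset.range n, ⋃ j ∈ Finset.range s,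
        ⋃ f ∈ (Finset.univ.filter fun f : Fin (s + 1) → Fin n =>
            f 0 = u ∧ Function.Injective f ∧ j + 2 ≤ s), lolEvent n s j f := by
  classical
  intro ω hω
  obtain ⟨s, j, g, hg0, hginj, hedge, hclose, hj2, hsn⟩ := exists_lollipop hω
  set f : Fin (s + 1) → Fin n := fun i => g (i : ℕ) with hfdef
  have hFzg : ∀ i : ℕ, i ≤ s → Fz f i = g i := by
    intro i hi
    rw [Fz_eq f hi]
  refine Set.mem_iUnion₂.2 ⟨s, Finset.mem_range.2 hsn, Set.mem_iUnion₂.2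
    ⟨j, Finset.mem_range.2 (by omega), Set.mem_iUnion₂.2 ⟨f, ?_, ?_⟩⟩⟩
  · simp only [Finset.mem_filter, Finset.mem_univ, true_and]
    refine ⟨by simpa [hfdef] using hg0, ?_, hj2⟩
    intro a b hab
    exact Fin.ext (hginj a b (by omega) (by omega) hab)
  · intro e he
    simp only [lolEdges, Finset.mem_image, Finset.mem_range] at he
    obtain ⟨i, hi, rfl⟩ := he
    by_cases his : i < s
    · rw [if_pos his, hFzg i (by omega), hFzg (i + 1) (by omega)]
      exact hedge i his
    · rw [if_neg his, hFzg s le_rfl, hFzg j (by omega)]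
      exact hclose

lemma bad_bound (p : ℝ) (u : Fin n) :
    erMeasure n p {ω | ¬ ((erGraph ω).induce (comp ω u)).IsAcyclic}
      ≤ ∑ s ∈ Finset.range n, ∑ j ∈ Finset.range s,
          (n : ℝ≥0∞) ^ s * (min (ENNReal.ofReal p) 1) ^ (s + 1) := by
  classical
  refine le_trans (measure_mono (bad_subset u)) ?_
  refine le_trans (measure_biUnion_finset_le _ _) (Finset.sum_le_sum fun s hs => ?_)
  refine le_trans (measure_biUnion_finset_le _ _) (Finset.sum_le_sum fun j hj => ?_)
  refine le_trans (measure_biUnion_finset_le _ _) ?_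
  have hEv : ∀ f ∈ Finset.univ.filter (fun f : Fin (s + 1) → Fin n =>
        f 0 = u ∧ Function.Injective f ∧ j + 2 ≤ s),
      erMeasure n p (lolEvent n s j f) = (min (ENNReal.ofReal p) 1) ^ (s + 1) := by
    intro f hf
    simp only [Finset.mem_filter, Finset.mem_univ, true_and] at hf
    rw [lolEvent, measure_event, card_lolEdges hf.2.1 hf.2.2]
  rw [Finset.sum_congr rfl hEv, Finset.sum_const, nsmul_eq_mul]
  refine mul_le_mul_left ?_ _
  have hsub : (Finset.univ.filter (fun f : Fin (s + 1) → Fin n =>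
      f 0 = u ∧ Function.Injective f ∧ j + 2 ≤ s)).card ≤ n ^ s := by
    have hinjOn : Set.InjOn (fun f : (Fin (s + 1) → Fin n) => fun i : Fin s => f i.succ)
        ((Finset.univ.filter (fun f : Fin (s + 1) → Fin n =>
          f 0 = u ∧ Function.Injective f ∧ j + 2 ≤ s)) : Finset (Fin (s + 1) → Fin n)) := by
      intro f hf g hg hfg
      simp only [Finset.coe_filter, Finset.mem_univ, true_and, Set.mem_setOf_eq] at hf hg
      funext i
      refine Fin.cases ?_ ?_ i
      · rw [hf.1, hg.1]
      · intro i
        exact congrFun hfg i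
    have hle := Finset.card_le_card_of_injOn (t := (Finset.univ : Finset (Fin s → Fin n)))
      (fun f : (Fin (s + 1) → Fin n) => fun i : Fin s => f i.succ)
      (fun f _ => Finset.mem_univ _) hinjOn
    simpa [Fintype.card_fun] using hle
  calc ((Finset.univ.filter (fun f : Fin (s + 1) → Fin n =>
          f 0 = u ∧ Function.Injective f ∧ j + 2 ≤ s)).card : ℝ≥0∞)
      ≤ ((n ^ s : ℕ) : ℝ≥0∞) := Nat.cast_le.2 hsub
    _ = (n : ℝ≥0∞) ^ s := by push_cast; rfl

lemma count_eq {α β : Type*} [Fintype α] (Q : α → β → Prop) (ω : β) :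
    ((Set.ncard {a | Q a ω} : ℕ) : ℝ≥0∞)
      = ∑ a : α, Set.indicator {ω' | Q a ω'} (fun _ => (1 : ℝ≥0∞)) ω := by
  classical
  rw [Set.ncard_eq_toFinset_card', Set.toFinset_setOf, Finset.card_filter, Nat.cast_sum]
  congr 1
  funext a
  rw [Set.indicator_apply]
  by_cases h : Q a ω <;> simp [h, Set.mem_setOf_eq]

lemma exp_bound (p : ℝ) :
    (∫⁻ ω, ((Set.ncard {u : Fin n |
        ¬ ((erGraph ω).induce (comp ω u)).IsAcyclic} : ℕ) : ℝ≥0∞) ∂ erMeasure n p)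
      ≤ (n : ℝ≥0∞) * ∑ s ∈ Finset.range n, ∑ j ∈ Finset.range s,
          (n : ℝ≥0∞) ^ s * (min (ENNReal.ofReal p) 1) ^ (s + 1) := by
  classical
  have h1 : (∫⁻ ω, ((Set.ncard {u : Fin n |
        ¬ ((erGraph ω).induce (comp ω u)).IsAcyclic} : ℕ) : ℝ≥0∞) ∂ erMeasure n p)
      = ∑ u : Fin n, erMeasure n p {ω | ¬ ((erGraph ω).induce (comp ω u)).IsAcyclic} := by
    rw [lintegral_congr (fun ω =>
        count_eq (fun (u : Fin n) ω => ¬ ((erGraph ω).induce (comp ω u)).IsAcyclic) ω),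
      lintegral_finset_sum' Finset.univ (fun u _ => (allMeasurableFun _).aemeasurable)]
    refine Finset.sum_congr rfl fun u _ => ?_
    have := lintegral_indicator_one (μ := erMeasure n p)
      (allMeasurable {ω | ¬ ((erGraph ω).induce (comp ω u)).IsAcyclic})
    convert this using 2
    rfl
  rw [h1]
  calc ∑ u : Fin n, erMeasure n p {ω | ¬ ((erGraph ω).induce (comp ω u)).IsAcyclic}
      ≤ ∑ _u : Fin n, ∑ s ∈ Finset.range n, ∑ j ∈ Finset.range s,
          (n : ℝ≥0∞) ^ s * (min (ENNReal.ofReal p) 1) ^ (s + 1) :=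
        Finset.sum_le_sum fun u _ => bad_bound p u
    _ = (n : ℝ≥0∞) * ∑ s ∈ Finset.range n, ∑ j ∈ Finset.range s,
          (n : ℝ≥0∞) ^ s * (min (ENNReal.ofReal p) 1) ^ (s + 1) := by
        rw [Finset.sum_const, Finset.card_univ, Fintype.card_fin, nsmul_eq_mul]

lemma sum_arith {lam : ℝ} (hlam : lam ∈ Set.Ioo (0 : ℝ) 1) {n : ℕ} (hn : 1 ≤ n) :
    (n : ℝ≥0∞) * ∑ s ∈ Finset.range n, ∑ j ∈ Finset.range s,
        (n : ℝ≥0∞) ^ s * (min (ENNReal.ofReal (lam / n)) 1) ^ (s + 1)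
      ≤ ENNReal.ofReal (∑' s : ℕ, (s : ℝ) * lam ^ s) := by
  have hne : (n : ℝ≥0∞) ≠ 0 := Nat.cast_ne_zero.2 (by omega)
  have htop : (n : ℝ≥0∞) ≠ ∞ := ENNReal.natCast_ne_top n
  set lamE := ENNReal.ofReal lam with hlamE
  have hq : min (ENNReal.ofReal (lam / n)) 1 ≤ lamE / (n : ℝ≥0∞) := by
    refine le_trans (min_le_left _ _) ?_
    rw [ENNReal.ofReal_div_of_pos (by exact_mod_cast hn : (0:ℝ) < n), ENNReal.ofReal_natCast]
  have hterm : ∀ s : ℕ, (n : ℝ≥0∞) ^ s * (min (ENNReal.ofReal (lam / n)) 1) ^ (s + 1)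
      ≤ lamE ^ (s + 1) * (n : ℝ≥0∞)⁻¹ := by
    intro s
    calc (n : ℝ≥0∞) ^ s * (min (ENNReal.ofReal (lam / n)) 1) ^ (s + 1)
        ≤ (n : ℝ≥0∞) ^ s * (lamE / (n : ℝ≥0∞)) ^ (s + 1) :=
          mul_le_mul_right (pow_le_pow_left₀ zero_le hq _) _
      _ = lamE ^ (s + 1) * ((n : ℝ≥0∞) ^ s * ((n : ℝ≥0∞) ^ (s + 1))⁻¹) := by
          rw [div_eq_mul_inv, mul_pow, ENNReal.inv_pow]
          ring
      _ = lamE ^ (s + 1) * (n : ℝ≥0∞)⁻¹ := by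
          congr 1
          rw [pow_succ, ENNReal.mul_inv (Or.inl (pow_ne_zero s hne))
            (Or.inl (ENNReal.pow_ne_top htop)), ← mul_assoc,
            ENNReal.mul_inv_cancel (pow_ne_zero s hne) (ENNReal.pow_ne_top htop), one_mul]
  calc (n : ℝ≥0∞) * ∑ s ∈ Finset.range n, ∑ j ∈ Finset.range s,
        (n : ℝ≥0∞) ^ s * (min (ENNReal.ofReal (lam / n)) 1) ^ (s + 1)
      ≤ (n : ℝ≥0∞) * ∑ s ∈ Finset.range n, ∑ j ∈ Finset.range s,
        lamE ^ (s + 1) * (n : ℝ≥0∞)⁻¹ :=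
        mul_le_mul_right (Finset.sum_le_sum fun s _ => Finset.sum_le_sum fun j _ => hterm s) _
    _ = (n : ℝ≥0∞) * ((∑ s ∈ Finset.range n, (s : ℝ≥0∞) * lamE ^ (s + 1)) * (n : ℝ≥0∞)⁻¹) := by
        congr 1
        rw [show (∑ s ∈ Finset.range n, ∑ j ∈ Finset.range s, lamE ^ (s + 1) * (n : ℝ≥0∞)⁻¹)
            = ∑ s ∈ Finset.range n, ((s : ℝ≥0∞) * lamE ^ (s + 1)) * (n : ℝ≥0∞)⁻¹ from
          Finset.sum_congr rfl fun s _ => by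
            rw [Finset.sum_const, Finset.card_range, nsmul_eq_mul, ← mul_assoc],
          ← Finset.sum_mul]
    _ = ∑ s ∈ Finset.range n, (s : ℝ≥0∞) * lamE ^ (s + 1) := by
        rw [mul_comm ((∑ s ∈ Finset.range n, (s : ℝ≥0∞) * lamE ^ (s + 1))) _, ← mul_assoc,
          ENNReal.mul_inv_cancel hne htop, one_mul]
    _ ≤ ∑ s ∈ Finset.range n, ENNReal.ofReal ((s : ℝ) * lam ^ s) := by
        refine Finset.sum_le_sum fun s _ => ?_
        have h1 : lamE ^ (s + 1) ≤ lamE ^ s := by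
          rw [pow_succ]
          calc lamE ^ s * lamE ≤ lamE ^ s * 1 :=
                mul_le_mul_right (ENNReal.ofReal_le_one.2 hlam.2.le) _
            _ = lamE ^ s := mul_one _
        calc (s : ℝ≥0∞) * lamE ^ (s + 1) ≤ (s : ℝ≥0∞) * lamE ^ s := mul_le_mul_right h1 _
          _ = ENNReal.ofReal ((s : ℝ) * lam ^ s) := by
              rw [ENNReal.ofReal_mul (Nat.cast_nonneg s), ENNReal.ofReal_pow hlam.1.le,
                ENNReal.ofReal_natCast]
    _ ≤ ENNReal.ofReal (∑' s : ℕ, (s : ℝ) * lam ^ s) := by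
        rw [← ENNReal.ofReal_sum_of_nonneg (fun s _ => mul_nonneg (Nat.cast_nonneg _) (pow_nonneg hlam.1.le _))]
        refine ENNReal.ofReal_le_ofReal ?_
        have hsum : Summable (fun s : ℕ => (s : ℝ) * lam ^ s) := by
          have := summable_pow_mul_geometric_of_norm_lt_one (R := ℝ) 1
            (r := lam) (by rw [Real.norm_eq_abs, abs_of_pos hlam.1]; exact hlam.2)
          simpa [pow_one] using this
        exact Summable.sum_le_tsum _ (fun s _ => mul_nonneg (Nat.cast_nonneg _) (pow_nonneg hlam.1.le _)) hsum

lemma exp_master {lam : ℝ} (hlam : lam ∈ Set.Ioo (0 : ℝ) 1) (n : ℕ) :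
    (∫⁻ ω, ((Set.ncard {u : Fin n |
        ¬ ((erGraph ω).induce (comp ω u)).IsAcyclic} : ℕ) : ℝ≥0∞) ∂ erMeasure n (lam / n))
      ≤ ENNReal.ofReal (∑' s : ℕ, (s : ℝ) * lam ^ s) := by
  rcases Nat.eq_zero_or_pos n with rfl | hn
  · have : ∀ ω : Sym2 (Fin 0) → Bool,
        ((Set.ncard {u : Fin 0 | ¬ ((erGraph ω).induce (comp ω u)).IsAcyclic} : ℕ) : ℝ≥0∞)
          = 0 := by
      intro ω
      simp [Set.eq_empty_of_isEmpty]
    rw [lintegral_congr this, lintegral_const, zero_mul]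
    exact zero_le
  · exact le_trans (exp_bound (lam / n)) (sum_arith hlam hn)

lemma mem_comp_self (ω : Sym2 (Fin n) → Bool) (u : Fin n) : u ∈ comp ω u :=
  SimpleGraph.Reachable.refl u

lemma comp_eq_of_mem {ω : Sym2 (Fin n) → Bool} {u v : Fin n} (h : v ∈ comp ω u) :
    comp ω v = comp ω u := by
  ext x
  exact ⟨fun hx => (h : (erGraph ω).Reachable u v).trans hx,
    fun hx => ((h : (erGraph ω).Reachable u v).symm.trans hx : _)⟩

lemma comp_connected (ω : Sym2 (Fin n) → Bool) (u : Fin n) :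
    ((erGraph ω).induce (comp ω u)).Connected := by
  apply SimpleGraph.induce_connected_of_patches (G := erGraph ω) u (mem_comp_self ω u)
  intro v hv
  obtain ⟨p⟩ := (hv : (erGraph ω).Reachable u v)
  refine ⟨{x | x ∈ p.support}, ?_, p.start_mem_support, p.end_mem_support, ?_⟩
  · intro x hx
    exact ⟨p.takeUntil x hx⟩
  · exact (p.connected_induce_support).preconnected _ _

lemma part2_bound {lam : ℝ} (hlam : lam ∈ Set.Ioo (0 : ℝ) 1) {ε : ℝ} {n : ℕ}
    (hpos : 0 < ε * Real.log n) :
    erMeasure n (lam / n) {ω | ∃ u : Fin n, ε * Real.log n < (Set.ncard (comp ω u) : ℝ) ∧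
        ¬ ((erGraph ω).induce (comp ω u)).IsTree}
      ≤ ENNReal.ofReal (∑' s : ℕ, (s : ℝ) * lam ^ s) / ENNReal.ofReal (ε * Real.log n) := by
  set a := ENNReal.ofReal (ε * Real.log n) with ha
  set F : (Sym2 (Fin n) → Bool) → ℝ≥0∞ := fun ω =>
    ((Set.ncard {u : Fin n | ¬ ((erGraph ω).induce (comp ω u)).IsAcyclic} : ℕ) : ℝ≥0∞)
    with hF
  have hsub : {ω | ∃ u : Fin n, ε * Real.log n < (Set.ncard (comp ω u) : ℝ) ∧
      ¬ ((erGraph ω).induce (comp ω u)).IsTree} ⊆ {ω | a ≤ F ω} := by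
    intro ω hω
    obtain ⟨u, hbig, hnt⟩ := hω
    have hnac : ¬ ((erGraph ω).induce (comp ω u)).IsAcyclic := by
      intro hac
      exact hnt ⟨comp_connected ω u, hac⟩
    have hsub2 : comp ω u ⊆ {v : Fin n | ¬ ((erGraph ω).induce (comp ω v)).IsAcyclic} := by
      intro v hv
      rw [Set.mem_setOf_eq, comp_eq_of_mem hv]
      exact hnac
    have hcard : Set.ncard (comp ω u)
        ≤ Set.ncard {v : Fin n | ¬ ((erGraph ω).induce (comp ω v)).IsAcyclic} :=
      Set.ncard_le_ncard hsub2 (Set.toFinite _)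
    show a ≤ F ω
    calc a ≤ ENNReal.ofReal ((Set.ncard (comp ω u) : ℕ) : ℝ) :=
          ENNReal.ofReal_le_ofReal hbig.le
      _ = ((Set.ncard (comp ω u) : ℕ) : ℝ≥0∞) := ENNReal.ofReal_natCast _
      _ ≤ F ω := Nat.cast_le.2 hcard
  refine le_trans (measure_mono hsub) ?_
  refine le_trans (meas_ge_le_lintegral_div (allMeasurableFun F).aemeasurable
    (by simp only [ha]; exact (ENNReal.ofReal_pos.2 hpos).ne') ENNReal.ofReal_ne_top) ?_
  exact ENNReal.div_le_div_right (exp_master hlam n) _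

end ErAux

/-- Fix `λ ∈ (0,1)` and `I_λ = λ − 1 − log λ`. The expected number of vertices of
`G(n, λ/n)` lying in a connected component of size at most `2·I_λ⁻¹·log n` that contains a
cycle is `O(1)` as `n → ∞`; consequently, for every `ε > 0`, a.a.s. all connected
components of size larger than `ε·log n` are trees. -/
theorem components_are_trees (lam : ℝ) (hlam : lam ∈ Set.Ioo (0 : ℝ) 1) :
    (∃ C : ℝ, ∀ n : ℕ,
      (∫⁻ ω, ((Set.ncard {u : Fin n |
          (Set.ncard (comp ω u) : ℝ) ≤ 2 / (lam - 1 - Real.log lam) * Real.log n ∧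
          ¬ ((erGraph ω).induce (comp ω u)).IsAcyclic} : ℕ) : ℝ≥0∞)
        ∂ erMeasure n (lam / n)) ≤ ENNReal.ofReal C) ∧
    (∀ ε : ℝ, 0 < ε →
      Tendsto (fun n : ℕ => erMeasure n (lam / n)
          {ω | ∀ u : Fin n, ε * Real.log n < (Set.ncard (comp ω u) : ℝ) →
            ((erGraph ω).induce (comp ω u)).IsTree})
        atTop (nhds 1)) := by
  classical
  constructor
  · refine ⟨∑' s : ℕ, (s : ℝ) * lam ^ s, fun n => ?_⟩
    refine le_trans (lintegral_mono fun ω => ?_) (ErAux.exp_master hlam n)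
    exact Nat.cast_le.2 (Set.ncard_le_ncard (fun u hu => hu.2) (Set.toFinite _))
  · intro ε hε
    have hbad : Tendsto (fun n : ℕ => erMeasure n (lam / n)
        {ω | ∃ u : Fin n, ε * Real.log n < (Set.ncard (comp ω u) : ℝ) ∧
          ¬ ((erGraph ω).induce (comp ω u)).IsTree}) atTop (nhds 0) := by
      have hlog : Tendsto (fun n : ℕ => ε * Real.log n) atTop atTop :=
        (Real.tendsto_log_atTop.comp tendsto_natCast_atTop_atTop).const_mul_atTop hε
      have hupper : Tendsto (fun n : ℕ =>
          ENNReal.ofReal (∑' s : ℕ, (s : ℝ) * lam ^ s) / ENNReal.ofReal (ε * Real.log n))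
          atTop (nhds 0) := by
        have := ENNReal.Tendsto.const_div
          (a := ENNReal.ofReal (∑' s : ℕ, (s : ℝ) * lam ^ s))
          (ENNReal.tendsto_ofReal_atTop.comp hlog) (Or.inr ENNReal.ofReal_ne_top)
        simpa using this
      refine tendsto_of_tendsto_of_tendsto_of_le_of_le' tendsto_const_nhds hupper
        (Eventually.of_forall fun n => zero_le) ?_
      filter_upwards [eventually_ge_atTop 2] with n hn
      have hpos : 0 < ε * Real.log n :=
        mul_pos hε (Real.log_pos (by exact_mod_cast Nat.lt_of_lt_of_le Nat.one_lt_two hn))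
      exact ErAux.part2_bound hlam hpos
    have heq : ∀ n : ℕ, erMeasure n (lam / n)
        {ω | ∀ u : Fin n, ε * Real.log n < (Set.ncard (comp ω u) : ℝ) →
          ((erGraph ω).induce (comp ω u)).IsTree}
        = 1 - erMeasure n (lam / n)
          {ω | ∃ u : Fin n, ε * Real.log n < (Set.ncard (comp ω u) : ℝ) ∧
            ¬ ((erGraph ω).induce (comp ω u)).IsTree} := by
      intro n
      haveI := ErAux.erProb n (lam / n)
      have hgood : {ω : Sym2 (Fin n) → Bool |
          ∀ u : Fin n, ε * Real.log n < (Set.ncard (comp ω u) : ℝ) →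
            ((erGraph ω).induce (comp ω u)).IsTree}
          = {ω | ∃ u : Fin n, ε * Real.log n < (Set.ncard (comp ω u) : ℝ) ∧
            ¬ ((erGraph ω).induce (comp ω u)).IsTree}ᶜ := by
        ext ω
        simp only [Set.mem_setOf_eq, Set.mem_compl_iff, not_exists, not_and, not_not]
      rw [hgood, measure_compl (ErAux.allMeasurable _) (measure_ne_top _ _), measure_univ]
    rw [show (fun n : ℕ => erMeasure n (lam / n)
        {ω | ∀ u : Fin n, ε * Real.log n < (Set.ncard (comp ω u) : ℝ) →
          ((erGraph ω).induce (comp ω u)).IsTree})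
        = fun n : ℕ => 1 - erMeasure n (lam / n)
          {ω | ∃ u : Fin n, ε * Real.log n < (Set.ncard (comp ω u) : ℝ) ∧
            ¬ ((erGraph ω).induce (comp ω u)).IsTree} from funext heq]
    have := ENNReal.Tendsto.sub (tendsto_const_nhds : Tendsto (fun _ : ℕ => (1 : ℝ≥0∞)) atTop (nhds 1)) hbad
      (Or.inl ENNReal.one_ne_top)
    simpa using this
end

section
/- Consider k ≥ 2 independent Erdős–Rényi graphs G_i = G(n, λ_i/n) on the same vertex set [n] and let C_2 denote the number of edges present in at least two of the graphs G_1,…,G_k (repeated edges). Then C_2 converges in distribution, as n → ∞, to a Poisson random variable with mean γ_2 = (1/2)·∑_{i<j} λ_i·λ_j. -/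
open MeasureTheory Filter
open scoped ENNReal

/-- The law of `k` independent Erdős–Rényi graphs `G_i = G(n, λ_i/n)` on the common vertex
set `Fin n`: the coordinate `(i, e)` indicates whether the edge `e` is present in `G_i`. -/
noncomputable def colMeasure (n k : ℕ) (lam : Fin k → ℝ) :
    Measure (Fin k × Sym2 (Fin n) → Bool) :=
  Measure.pi fun x =>
    (PMF.bernoulli (min (Real.toNNReal (lam x.1 / n)) 1) (min_le_right _ _)).toMeasure

/-- The number of repeated edges: non-loop edges present in at least two of the graphs. -/
noncomputable def repeatCount (n k : ℕ) (ω : Fin k × Sym2 (Fin n) → Bool) : ℕ :=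
  Set.ncard {e : Sym2 (Fin n) | ¬ e.IsDiag ∧ 2 ≤ Set.ncard {i : Fin k | ω (i, e) = true}}


open Finset

lemma measure_eq_sum_sing {α : Type*} [Fintype α] [MeasurableSpace α]
    [MeasurableSingletonClass α] (μ : Measure α) (s : Set α) [DecidablePred (· ∈ s)] :
    μ s = ∑ a ∈ univ.filter (· ∈ s), μ {a} := by
  rw [← measure_biUnion_finset]
  · congr 1; ext x; simp
  · intro x _ y _ hxy
    simp [Function.onFun, Set.disjoint_singleton, hxy]
  · intro b _; exact measurableSet_singleton b

lemma pi_count_binomial {κ ι : Type*} [Fintype κ] [DecidableEq κ] [Fintype ι] [DecidableEq ι]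
    (ν : κ → Measure Bool) (hν : ∀ i, IsProbabilityMeasure (ν i))
    (R : (κ → Bool) → Prop) [DecidablePred R] (D : Finset ι) (m : ℕ) :
    Measure.pi (fun x : κ × ι => ν x.1)
      {ω : κ × ι → Bool | (D.filter (fun e => R (fun i => ω (i, e)))).card = m}
    = (D.card.choose m : ℝ≥0∞) *
        (∑ f ∈ univ.filter R, ∏ i, ν i {f i}) ^ m *
        (∑ f ∈ univ.filter (fun f => ¬ R f), ∏ i, ν i {f i}) ^ (D.card - m) := by
  classical
  set p : ℝ≥0∞ := ∑ f ∈ univ.filter R, ∏ i, ν i {f i} with hp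
  set q : ℝ≥0∞ := ∑ f ∈ univ.filter (fun f => ¬ R f), ∏ i, ν i {f i} with hq
  set V : (κ → Bool) → ℝ≥0∞ := fun f => ∏ i, ν i {f i} with hV
  have h1 : ∀ i : κ, ∑ b : Bool, ν i {b} = 1 := by
    intro i
    rw [Fintype.sum_bool]
    rw [← measure_union (by simp) (measurableSet_singleton false)]
    have : ({true} ∪ {false} : Set Bool) = Set.univ := by ext b; cases b <;> simp
    rw [this, measure_univ]
  have hVtot : ∑ f : κ → Bool, V f = 1 := by
    have h2 := Finset.prod_univ_sum (fun _ : κ => (univ : Finset Bool)) (fun i b => ν i {b})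
    rw [Fintype.piFinset_univ] at h2
    rw [hV, ← h2]
    simp only [Fintype.sum_bool] at h1 ⊢
    simp [h1]
  -- singleton measures
  have hsing : ∀ ω : κ × ι → Bool,
      Measure.pi (fun x : κ × ι => ν x.1) {ω} = ∏ x : κ × ι, ν x.1 {ω x} := by
    intro ω
    rw [← Set.univ_pi_singleton ω, Measure.pi_pi]
  -- the inner one-coordinate sums
  have hce : ∀ (S : Finset ι), S ∈ D.powersetCard m → ∀ e : ι,
      (∑ f : κ → Bool, (if e ∈ S then (if R f then V f else 0)
        else if e ∈ D then (if R f then 0 else V f) else V f))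
      = if e ∈ S then p else if e ∈ D then q else 1 := by
    intro S hS e
    by_cases heS : e ∈ S
    · simp only [heS, if_true]
      rw [← Finset.sum_filter]
    · by_cases heD : e ∈ D
      · simp only [heS, heD, if_false, if_true]
        have hflip : ∀ f : κ → Bool, (if R f then (0:ℝ≥0∞) else V f) = if ¬ R f then V f else 0 := by
          intro f; by_cases hR : R f <;> simp [hR]
        simp only [hflip]
        rw [← Finset.sum_filter]
      · simp only [heS, heD, if_false]
        exact hVtot
  rw [measure_eq_sum_sing]
  have step1 : ∑ ω ∈ univ.filter
        (· ∈ {ω : κ × ι → Bool | (D.filter (fun e => R (fun i => ω (i, e)))).card = m}),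
        Measure.pi (fun x : κ × ι => ν x.1) {ω}
      = ∑ g : ι → κ → Bool,
          (if (D.filter (fun e => R (g e))).card = m then ∏ e, V (g e) else 0) := by
    rw [Finset.sum_congr rfl (fun ω _ => hsing ω), Finset.sum_filter]
    let c : (ι → κ → Bool) ≃ (κ × ι → Bool) :=
      ⟨fun g x => g x.2 x.1, fun ω e i => ω (i, e), fun g => rfl, fun ω => rfl⟩
    rw [← Equiv.sum_comp c]
    refine Finset.sum_congr rfl fun g _ => ?_
    have hprod : ∏ x : κ × ι, ν x.1 {c g x} = ∏ e, V (g e) := by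
      rw [Fintype.prod_prod_type]
      rw [Finset.prod_comm]
      rfl
    simp only [Set.mem_setOf_eq]
    rw [hprod]
    rfl
  rw [step1]
  have step2 : ∀ g : ι → κ → Bool,
      (if (D.filter (fun e => R (g e))).card = m then ∏ e, V (g e) else 0)
      = ∑ S ∈ D.powersetCard m,
          (if D.filter (fun e => R (g e)) = S then ∏ e, V (g e) else 0) := by
    intro g
    rw [Finset.sum_ite_eq (D.powersetCard m) (D.filter (fun e => R (g e)))]
    by_cases h : (D.filter (fun e => R (g e))).card = m
    · rw [if_pos h, if_pos (Finset.mem_powersetCard.2 ⟨Finset.filter_subset _ _, h⟩)]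
    · rw [if_neg h, if_neg (fun hc => h (Finset.mem_powersetCard.1 hc).2)]
  simp only [step2]
  rw [Finset.sum_comm]
  have step3 : ∀ S ∈ D.powersetCard m,
      (∑ g : ι → κ → Bool, if D.filter (fun e => R (g e)) = S then ∏ e, V (g e) else 0)
      = p ^ m * q ^ (D.card - m) := by
    intro S hS
    obtain ⟨hSD, hScard⟩ := Finset.mem_powersetCard.1 hS
    have factored : ∀ g : ι → κ → Bool,
        (if D.filter (fun e => R (g e)) = S then ∏ e, V (g e) else 0)
        = ∏ e, (if e ∈ S then (if R (g e) then V (g e) else 0)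
            else if e ∈ D then (if R (g e) then 0 else V (g e)) else V (g e)) := by
      intro g
      by_cases h : D.filter (fun e => R (g e)) = S
      · rw [if_pos h]
        refine Finset.prod_congr rfl fun e _ => ?_
        by_cases heS : e ∈ S
        · have hef : e ∈ D.filter (fun e => R (g e)) := by rw [h]; exact heS
          have : R (g e) := (Finset.mem_filter.1 hef).2
          simp [heS, this]
        · by_cases heD : e ∈ D
          · have : ¬ R (g e) := fun hR => heS (h ▸ Finset.mem_filter.2 ⟨heD, hR⟩)
            simp [heS, heD, this]
          · simp [heS, heD]
      · rw [if_neg h]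
        have hne : ∃ e, ¬ (e ∈ D.filter (fun e => R (g e)) ↔ e ∈ S) := by
          by_contra hc
          push_neg at hc
          exact h (Finset.ext fun e => (hc e))
        obtain ⟨e, he⟩ := hne
        refine (Finset.prod_eq_zero (Finset.mem_univ e) ?_).symm
        by_cases heS : e ∈ S
        · have hef : e ∉ D.filter (fun e => R (g e)) := fun hmem => he (iff_of_true hmem heS)
          have heD : e ∈ D := hSD heS
          have hR : ¬ R (g e) := fun hR => hef (Finset.mem_filter.2 ⟨heD, hR⟩)
          simp [heS, hR]
        · have hef : e ∈ D.filter (fun e => R (g e)) := by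
            by_contra hef
            exact he (iff_of_false hef heS)
          obtain ⟨heD, hR⟩ := Finset.mem_filter.1 hef
          simp [heS, heD, hR]
    simp only [factored]
    have h2 := Finset.prod_univ_sum (fun _ : ι => (univ : Finset (κ → Bool)))
      (fun e f => (if e ∈ S then (if R f then V f else 0)
            else if e ∈ D then (if R f then 0 else V f) else V f))
    rw [Fintype.piFinset_univ] at h2
    rw [← h2]
    rw [Finset.prod_congr rfl (fun e _ => hce S hS e)]
    -- now evaluate the product of ifs
    rw [← Finset.prod_filter_mul_prod_filter_not univ (· ∈ D)]
    have hDfilter : univ.filter (· ∈ D) = D := by ext e; simp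
    have houter : ∏ e ∈ univ.filter (· ∉ D), (if e ∈ S then p else if e ∈ D then q else 1) = 1 := by
      refine Finset.prod_eq_one fun e he => ?_
      have heD : e ∉ D := (Finset.mem_filter.1 he).2
      have heS : e ∉ S := fun h => heD (hSD h)
      simp [heS, heD]
    rw [hDfilter, houter, mul_one]
    rw [← Finset.prod_filter_mul_prod_filter_not D (· ∈ S)]
    have hDS : D.filter (· ∈ S) = S := by
      ext e; simp only [Finset.mem_filter]
      exact ⟨fun h => h.2, fun h => ⟨hSD h, h⟩⟩
    have h5 : ∏ e ∈ D.filter (· ∈ S), (if e ∈ S then p else if e ∈ D then q else 1) = p ^ m := by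
      rw [hDS, Finset.prod_congr rfl (fun e (he : e ∈ S) => if_pos he), Finset.prod_const, hScard]
    have hval : ∀ e ∈ D \ S, (if e ∈ S then p else if e ∈ D then q else 1) = q := by
      intro e he
      obtain ⟨heD, heS⟩ := Finset.mem_sdiff.1 he
      simp [heD, heS]
    have h6 : ∏ e ∈ D.filter (· ∉ S), (if e ∈ S then p else if e ∈ D then q else 1)
        = q ^ (D.card - m) := by
      rw [Finset.filter_not, hDS, Finset.prod_congr rfl hval, Finset.prod_const,
        Finset.card_sdiff_of_subset hSD, hScard]
    rw [h5, h6]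
  rw [Finset.sum_congr rfl step3, Finset.sum_const, Finset.card_powersetCard,
    nsmul_eq_mul, mul_assoc]

lemma binom_to_poisson (γ : ℝ) (N : ℕ → ℕ) (P : ℕ → ℝ) (m : ℕ)
    (hN : Tendsto (fun n => (N n : ℝ)) atTop atTop)
    (h0 : ∀ᶠ n in atTop, 0 ≤ P n)
    (h1 : ∀ᶠ n in atTop, P n ≤ 1)
    (hNP : Tendsto (fun n => (N n : ℝ) * P n) atTop (nhds γ)) :
    Tendsto (fun n => ((N n).choose m : ℝ) * P n ^ m * (1 - P n) ^ (N n - m)) atTop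
      (nhds (Real.exp (-γ) * γ ^ m / m.factorial)) := by
  have hNlarge : ∀ C : ℝ, ∀ᶠ n in atTop, C ≤ (N n : ℝ) := fun C => hN.eventually_ge_atTop C
  -- P n → 0
  have hP0 : Tendsto P atTop (nhds 0) := by
    have hinv : Tendsto (fun n => ((N n : ℝ))⁻¹) atTop (nhds 0) := hN.inv_tendsto_atTop
    have := hNP.mul hinv
    rw [mul_zero] at this
    refine this.congr' ?_
    filter_upwards [hNlarge 1] with n hn
    field_simp
  have hPhalf : ∀ᶠ n in atTop, P n ≤ 1/2 := hP0.eventually_le_const (by norm_num)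
  -- part 1 : choose * P^m → γ^m/m!
  have part1 : Tendsto (fun n => ((N n).choose m : ℝ) * P n ^ m) atTop
      (nhds (γ ^ m / m.factorial)) := by
    have hterm : ∀ j : ℕ, Tendsto (fun n => ((N n : ℝ) - j) * P n) atTop (nhds γ) := by
      intro j
      have hj : Tendsto (fun n => (j : ℝ) * P n) atTop (nhds 0) := by
        have := hP0.const_mul (j : ℝ); rwa [mul_zero] at this
      have := hNP.sub hj
      rw [sub_zero] at this
      exact this.congr (fun n => by ring)
    have hprod : Tendsto (fun n => ∏ j ∈ Finset.range m, (((N n : ℝ) - j) * P n)) atTop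
        (nhds (γ ^ m)) := by
      have := tendsto_finset_prod (Finset.range m) (fun j _ => hterm j)
      simpa using this
    have := hprod.div_const (m.factorial : ℝ)
    refine this.congr' ?_
    filter_upwards [hNlarge m] with n hn
    have hmn : m ≤ N n := by exact_mod_cast hn
    have h1 : ((N n).descFactorial m : ℝ) = ∏ j ∈ Finset.range m, ((N n : ℝ) - j) := by
      rw [Nat.descFactorial_eq_prod_range, Nat.cast_prod]
      exact Finset.prod_congr rfl fun j hj =>
        Nat.cast_sub ((Finset.mem_range.1 hj).le.trans hmn)
    have h2 : ((N n).descFactorial m : ℝ) = m.factorial * (N n).choose m := by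
      rw [Nat.descFactorial_eq_factorial_mul_choose]; push_cast; ring
    rw [Finset.prod_mul_distrib, Finset.prod_const, Finset.card_range, ← h1, h2]
    field_simp
  -- part 2 : (1-P)^(N-m) → exp (-γ)
  have part2 : Tendsto (fun n => (1 - P n) ^ (N n - m)) atTop (nhds (Real.exp (-γ))) := by
    -- the exponent ∑ : log form
    have hlog : Tendsto (fun n => ((N n : ℝ) - m) * Real.log (1 - P n)) atTop (nhds (-γ)) := by
      have hmain : Tendsto (fun n => -(((N n : ℝ) - m) * P n)) atTop (nhds (-γ)) := by
        have hj : Tendsto (fun n => (m : ℝ) * P n) atTop (nhds 0) := by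
          have := hP0.const_mul (m : ℝ); rwa [mul_zero] at this
        have := (hNP.sub hj).neg
        rw [sub_zero] at this
        exact this.congr (fun n => by ring)
      have herr : Tendsto (fun n => ((N n : ℝ) - m) * (Real.log (1 - P n) + P n)) atTop
          (nhds 0) := by
        have hbound : Tendsto (fun n => 2 * ((N n : ℝ) * P n) * P n) atTop (nhds 0) := by
          have := ((hNP.const_mul 2).mul hP0)
          rwa [mul_zero] at this
        refine squeeze_zero_norm' ?_ hbound
        filter_upwards [h0, hPhalf, hNlarge (m : ℝ)] with n hn0 hnh hnm
        have hPlt : |P n| < 1 := by rw [abs_of_nonneg hn0]; linarith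
        have hkey := Real.abs_log_sub_add_sum_range_le hPlt 1
        simp only [Finset.range_one, Finset.sum_singleton, pow_one] at hkey
        norm_num at hkey
        rw [abs_of_nonneg hn0] at hkey
        have hkey' : |Real.log (1 - P n) + P n| ≤ 2 * P n ^ 2 := by
          rw [add_comm]
          refine hkey.trans ?_
          rw [div_le_iff₀ (by linarith : (0:ℝ) < 1 - P n)]
          nlinarith
        rw [norm_mul, Real.norm_eq_abs, Real.norm_eq_abs]
        have hNm : |(N n : ℝ) - m| ≤ (N n : ℝ) := by
          rw [abs_of_nonneg (by linarith)]
          have : (0:ℝ) ≤ m := Nat.cast_nonneg m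
          linarith
        calc |(N n : ℝ) - m| * |Real.log (1 - P n) + P n|
            ≤ (N n : ℝ) * (2 * P n ^ 2) :=
              mul_le_mul hNm hkey' (abs_nonneg _) (Nat.cast_nonneg _)
          _ = 2 * ((N n : ℝ) * P n) * P n := by ring
      have := hmain.add herr
      rw [add_zero] at this
      refine this.congr (fun n => by ring)
    have hcast : ∀ᶠ n in atTop, ((N n - m : ℕ) : ℝ) = (N n : ℝ) - m := by
      filter_upwards [hNlarge m] with n hn
      exact Nat.cast_sub (by exact_mod_cast hn)
    have hexp := (Real.continuous_exp.tendsto _).comp hlog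
    refine hexp.congr' ?_
    filter_upwards [h0, hPhalf, hcast] with n hn0 hnh hc
    have hpos : (0:ℝ) < 1 - P n := by linarith
    show Real.exp (((N n : ℝ) - m) * Real.log (1 - P n)) = (1 - P n) ^ (N n - m)
    rw [← hc, ← Real.log_pow, Real.exp_log (pow_pos hpos _)]
  have hfin := part1.mul part2
  have heq : (γ ^ m / m.factorial) * Real.exp (-γ) = Real.exp (-γ) * γ ^ m / m.factorial := by
    ring
  rw [heq] at hfin
  exact hfin

lemma ncard_setOf {α : Type*} [Fintype α] (Pr : α → Prop) [DecidablePred Pr] :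
    Set.ncard {x | Pr x} = (Finset.univ.filter Pr).card := by
  simp [Set.ncard_eq_toFinset_card', Set.toFinset_setOf]

/-- repeated-edge predicate on a block -/
def repR (k : ℕ) : (Fin k → Bool) → Prop :=
  fun f => 2 ≤ (Finset.univ.filter (fun i => f i = true)).card

instance (k : ℕ) : DecidablePred (repR k) := fun _ => by unfold repR; infer_instance

/-- the probability an edge is repeated (real version) -/
noncomputable def edgeP (k : ℕ) (lam : Fin k → ℝ) (n : ℕ) : ℝ :=
  ∑ f ∈ univ.filter (repR k), ∏ i, (if f i then lam i / n else 1 - lam i / n)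

noncomputable def bern (n k : ℕ) (lam : Fin k → ℝ) (i : Fin k) : Measure Bool :=
  (PMF.bernoulli (min (Real.toNNReal (lam i / n)) 1) (min_le_right _ _)).toMeasure

lemma measure_formula (n k : ℕ) (lam : Fin k → ℝ) (m : ℕ) :
    (colMeasure n k lam) {ω | repeatCount n k ω = m}
    = ((n.choose 2).choose m : ℝ≥0∞)
      * (∑ f ∈ univ.filter (repR k), ∏ i, (bern n k lam i) {f i}) ^ m
      * (∑ f ∈ univ.filter (fun f => ¬ repR k f), ∏ i, (bern n k lam i) {f i})
          ^ (n.choose 2 - m) := by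
  classical
  have hD : (univ.filter (fun e : Sym2 (Fin n) => ¬ e.IsDiag)).card = n.choose 2 := by
    rw [← Fintype.card_subtype, Sym2.card_subtype_not_diag, Fintype.card_fin]
  have hset : {ω : Fin k × Sym2 (Fin n) → Bool | repeatCount n k ω = m}
      = {ω | (((univ.filter (fun e : Sym2 (Fin n) => ¬ e.IsDiag)).filter
          (fun e => repR k (fun i => ω (i, e)))).card = m)} := by
    ext ω
    simp only [Set.mem_setOf_eq, repeatCount]
    rw [Finset.filter_filter]
    have h1 : ∀ e : Sym2 (Fin n), Set.ncard {i : Fin k | ω (i, e) = true}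
        = (univ.filter (fun i => ω (i, e) = true)).card := fun e => ncard_setOf _
    have h2 : Set.ncard {e : Sym2 (Fin n) | ¬ e.IsDiag ∧
          2 ≤ Set.ncard {i : Fin k | ω (i, e) = true}}
        = (univ.filter (fun e : Sym2 (Fin n) => ¬ e.IsDiag ∧
            repR k (fun i => ω (i, e)))).card := by
      rw [ncard_setOf]
      exact congrArg Finset.card (Finset.filter_congr (fun e _ => by rw [repR, h1 e]))
    rw [h2]
  rw [hset, ← hD]
  exact pi_count_binomial (bern n k lam) (fun i => PMF.toMeasure.isProbabilityMeasure _)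
    (repR k) _ m

lemma pq_real (n k : ℕ) (lam : Fin k → ℝ) (hpos : ∀ i, 0 < lam i) (hn : ∀ i, lam i ≤ n) :
    (∑ f ∈ univ.filter (repR k), ∏ i, (bern n k lam i) {f i})
        = ENNReal.ofReal (edgeP k lam n)
    ∧ (∑ f ∈ univ.filter (fun f => ¬ repR k f), ∏ i, (bern n k lam i) {f i})
        = ENNReal.ofReal (1 - edgeP k lam n)
    ∧ 0 ≤ edgeP k lam n ∧ edgeP k lam n ≤ 1 := by
  classical
  have ha0 : ∀ i, 0 ≤ lam i / n := fun i => div_nonneg (hpos i).le (Nat.cast_nonneg n)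
  have ha1 : ∀ i, lam i / n ≤ 1 := fun i => div_le_one_of_le₀ (hn i) (Nat.cast_nonneg n)
  have hw0 : ∀ (f : Fin k → Bool) (i : Fin k),
      0 ≤ (if f i then lam i / n else 1 - lam i / n) := by
    intro f i
    cases hfi : f i
    · simp only [hfi, Bool.false_eq_true, if_false]
      linarith [ha1 i]
    · simp [hfi, ha0 i]
  have hsingle : ∀ (i : Fin k) (b : Bool),
      (bern n k lam i) {b} = ENNReal.ofReal (if b then lam i / n else 1 - lam i / n) := by
    intro i b
    rw [bern, PMF.toMeasure_apply_singleton _ _ (measurableSet_singleton b),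
      PMF.bernoulli_apply]
    have hmin : min (Real.toNNReal (lam i / n)) 1 = Real.toNNReal (lam i / n) :=
      min_eq_left (Real.toNNReal_le_one.2 (ha1 i))
    cases b
    · show (1 : ℝ≥0∞) - ((min (Real.toNNReal (lam i / n)) 1 : NNReal) : ℝ≥0∞) = _
      rw [hmin]
      show (1 : ℝ≥0∞) - ENNReal.ofReal (lam i / n) = _
      rw [← ENNReal.ofReal_one, ← ENNReal.ofReal_sub _ (ha0 i)]
      simp
    · show ((min (Real.toNNReal (lam i / n)) 1 : NNReal) : ℝ≥0∞) = _
      rw [hmin]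
      rfl
  have hprod : ∀ f : Fin k → Bool, ∏ i, (bern n k lam i) {f i}
      = ENNReal.ofReal (∏ i, (if f i then lam i / n else 1 - lam i / n)) := by
    intro f
    rw [ENNReal.ofReal_prod_of_nonneg (fun i _ => hw0 f i)]
    exact Finset.prod_congr rfl fun i _ => hsingle i (f i)
  have hsum : ∀ (s : Finset (Fin k → Bool)), (∑ f ∈ s, ∏ i, (bern n k lam i) {f i})
      = ENNReal.ofReal (∑ f ∈ s, ∏ i, (if f i then lam i / n else 1 - lam i / n)) := by
    intro s
    rw [ENNReal.ofReal_sum_of_nonneg (fun f _ => Finset.prod_nonneg (fun i _ => hw0 f i))]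
    exact Finset.sum_congr rfl fun f _ => hprod f
  have htot : ∑ f : Fin k → Bool, ∏ i, (if f i then lam i / n else 1 - lam i / n) = 1 := by
    have h2 := Finset.prod_univ_sum (fun _ : Fin k => (univ : Finset Bool))
      (fun i b => (if b then lam i / n else 1 - lam i / n))
    rw [Fintype.piFinset_univ] at h2
    rw [← h2]
    have hone : ∀ i : Fin k, ∑ b : Bool, (if b then lam i / n else 1 - lam i / n) = 1 := by
      intro i; rw [Fintype.sum_bool]; simp
    simp [hone]
  have hsplit := Finset.sum_filter_add_sum_filter_not univ (repR k)
      (fun f => ∏ i, (if f i then lam i / n else 1 - lam i / n))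
  rw [htot] at hsplit
  have hQdef : ∑ f ∈ univ.filter (fun f => ¬ repR k f),
      ∏ i, (if f i then lam i / n else 1 - lam i / n) = 1 - edgeP k lam n := by
    rw [edgeP]; linarith
  have hP0 : 0 ≤ edgeP k lam n :=
    Finset.sum_nonneg fun f _ => Finset.prod_nonneg fun i _ => hw0 f i
  have hQ0 : 0 ≤ 1 - edgeP k lam n := by
    rw [← hQdef]
    exact Finset.sum_nonneg fun f _ => Finset.prod_nonneg fun i _ => hw0 f i
  refine ⟨hsum _, ?_, hP0, by linarith⟩
  rw [hsum _, hQdef]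

lemma edgeP_limit (k : ℕ) (lam : Fin k → ℝ) :
    Tendsto (fun n : ℕ => ((n.choose 2 : ℕ) : ℝ) * edgeP k lam n) atTop
      (nhds ((1:ℝ)/2 * ∑ p ∈ univ.filter (fun p : Fin k × Fin k => p.1 < p.2),
        lam p.1 * lam p.2)) := by
  classical
  have hterm : ∀ f ∈ univ.filter (repR k),
      Tendsto (fun n : ℕ => ((n.choose 2 : ℕ) : ℝ) *
        ∏ i, (if f i then lam i / n else 1 - lam i / n)) atTop
      (nhds (if (univ.filter (fun i => f i = true)).card = 2
        then (∏ i ∈ univ.filter (fun i => f i = true), lam i) / 2 else 0)) := by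
    intro f hf
    have hR2 : 2 ≤ (univ.filter (fun i => f i = true)).card := (Finset.mem_filter.1 hf).2
    obtain ⟨t', ht'⟩ : ∃ t', (univ.filter (fun i => f i = true)).card = t' + 2 :=
      ⟨(univ.filter (fun i => f i = true)).card - 2, by omega⟩
    have hB : Tendsto (fun n : ℕ => ∏ i ∈ univ.filter (fun i => ¬ f i = true),
        (1 - lam i / n)) atTop (nhds 1) := by
      have hone : ∀ i : Fin k, Tendsto (fun n : ℕ => 1 - lam i / n) atTop (nhds 1) := by
        intro i
        have h0 : Tendsto (fun n : ℕ => lam i / n) atTop (nhds 0) := by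
          have := tendsto_one_div_atTop_nhds_zero_nat.const_mul (lam i)
          rw [mul_zero] at this
          exact this.congr fun n => by rw [mul_one_div]
        have := (tendsto_const_nhds (x := (1:ℝ)) (f := atTop)).sub h0
        rwa [sub_zero] at this
      have := tendsto_finset_prod (univ.filter (fun i => ¬ f i = true))
        (fun i (_ : i ∈ univ.filter (fun i => ¬ f i = true)) => hone i)
      simpa using this
    have hmain : Tendsto (fun n : ℕ => ((1:ℝ) - 1/n) * (1/(n:ℝ)^t') *
        ((∏ i ∈ univ.filter (fun i => f i = true), lam i)/2 *
          ∏ i ∈ univ.filter (fun i => ¬ f i = true), (1 - lam i / n))) atTop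
        (nhds (1 * (if t' = 0 then 1 else 0) *
          ((∏ i ∈ univ.filter (fun i => f i = true), lam i)/2 * 1))) := by
      refine Tendsto.mul (Tendsto.mul ?_ ?_) (Tendsto.mul tendsto_const_nhds hB)
      · have := (tendsto_const_nhds (x := (1:ℝ)) (f := atTop)).sub
          tendsto_one_div_atTop_nhds_zero_nat
        rwa [sub_zero] at this
      · rcases Nat.eq_zero_or_pos t' with h0 | hpos'
        · subst h0; simp
        · rw [if_neg (by omega)]
          have hpow : Tendsto (fun n : ℕ => ((n:ℝ))^t') atTop atTop :=
            (tendsto_pow_atTop (by omega)).comp tendsto_natCast_atTop_atTop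
          have := hpow.inv_tendsto_atTop
          simp only [one_div]
          exact this
    have hvaleq : (1:ℝ) * (if t' = 0 then 1 else 0) *
        ((∏ i ∈ univ.filter (fun i => f i = true), lam i)/2 * 1)
        = (if (univ.filter (fun i => f i = true)).card = 2
            then (∏ i ∈ univ.filter (fun i => f i = true), lam i) / 2 else 0) := by
      rcases eq_or_ne t' 0 with h | h
      · rw [if_pos h, if_pos (by omega)]; ring
      · rw [if_neg h, if_neg (by omega)]; ring
    rw [hvaleq] at hmain
    refine hmain.congr' ?_
    filter_upwards [eventually_ge_atTop 1] with n hn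
    have hn0 : (n:ℝ) ≠ 0 := by
      have : (0:ℝ) < n := by exact_mod_cast hn
      linarith
    have hsplitprod : ∏ i, (if f i then lam i / n else 1 - lam i / n)
        = (∏ i ∈ univ.filter (fun i => f i = true), (lam i / n)) *
          ∏ i ∈ univ.filter (fun i => ¬ f i = true), (1 - lam i / n) := by
      rw [← Finset.prod_filter_mul_prod_filter_not univ (fun i => f i = true)]
      congr 1
      · exact Finset.prod_congr rfl fun i hi => by
          have h := (Finset.mem_filter.1 hi).2; simp [h]
      · exact Finset.prod_congr rfl fun i hi => by
          have h := (Finset.mem_filter.1 hi).2; simp [h]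
    have hTn : ∏ i ∈ univ.filter (fun i => f i = true), (lam i / n)
        = (∏ i ∈ univ.filter (fun i => f i = true), lam i) / (n:ℝ)^(t' + 2) := by
      rw [Finset.prod_div_distrib, Finset.prod_const, ← ht']
    rw [Nat.cast_choose_two, hsplitprod, hTn, pow_add]
    field_simp
  have hlim := tendsto_finset_sum (univ.filter (repR k)) hterm
  have hfun : ∀ n : ℕ, ∑ f ∈ univ.filter (repR k), (((n.choose 2 : ℕ) : ℝ) *
      ∏ i, (if f i then lam i / n else 1 - lam i / n))
      = ((n.choose 2 : ℕ) : ℝ) * edgeP k lam n := by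
    intro n; rw [edgeP, Finset.mul_sum]
  have hval : ∑ f ∈ univ.filter (repR k), (if (univ.filter (fun i => f i = true)).card = 2
      then (∏ i ∈ univ.filter (fun i => f i = true), lam i) / 2 else 0)
      = (1:ℝ)/2 * ∑ p ∈ univ.filter (fun p : Fin k × Fin k => p.1 < p.2),
          lam p.1 * lam p.2 := by
    rw [Finset.sum_filter]
    have hstep : ∀ f : Fin k → Bool,
        (if repR k f then (if (univ.filter (fun i => f i = true)).card = 2
          then (∏ i ∈ univ.filter (fun i => f i = true), lam i) / 2 else 0) else 0)
        = if (univ.filter (fun i => f i = true)).card = 2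
            then (∏ i ∈ univ.filter (fun i => f i = true), lam i) / 2 else 0 := by
      intro f
      by_cases h2 : (univ.filter (fun i => f i = true)).card = 2
      · have hr : repR k f := by rw [repR, h2]
        simp [hr, h2]
      · simp [h2]
    simp only [hstep]
    rw [← Finset.sum_filter, Finset.mul_sum]
    have htrue : ∀ p : Fin k × Fin k, univ.filter
        (fun x => (decide (x = p.1 ∨ x = p.2) : Bool) = true) = {p.1, p.2} := by
      intro p; ext x; simp
    refine (Finset.sum_bij
      (i := fun (p : Fin k × Fin k) (_ : p ∈ univ.filter (fun p : Fin k × Fin k => p.1 < p.2)) =>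
        fun x => decide (x = p.1 ∨ x = p.2)) ?_ ?_ ?_ ?_).symm
    · intro p hp
      have hlt : p.1 < p.2 := (Finset.mem_filter.1 hp).2
      refine Finset.mem_filter.2 ⟨Finset.mem_univ _, ?_⟩
      rw [htrue p]
      exact Finset.card_pair (ne_of_lt hlt)
    · intro p hp q hq hpq
      have hltp : p.1 < p.2 := (Finset.mem_filter.1 hp).2
      have hltq : q.1 < q.2 := (Finset.mem_filter.1 hq).2
      have hiff : ∀ x : Fin k, (x = p.1 ∨ x = p.2) ↔ (x = q.1 ∨ x = q.2) := by
        intro x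
        exact decide_eq_decide.mp (congrFun hpq x)
      have h1 : p.1.val = q.1.val ∨ p.1.val = q.2.val := by
        rcases (hiff p.1).1 (Or.inl rfl) with h | h
        · exact Or.inl (congrArg Fin.val h)
        · exact Or.inr (congrArg Fin.val h)
      have h2 : p.2.val = q.1.val ∨ p.2.val = q.2.val := by
        rcases (hiff p.2).1 (Or.inr rfl) with h | h
        · exact Or.inl (congrArg Fin.val h)
        · exact Or.inr (congrArg Fin.val h)
      have hvp : p.1.val < p.2.val := hltp
      have hvq : q.1.val < q.2.val := hltq
      have : p.1.val = q.1.val ∧ p.2.val = q.2.val := by omega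
      exact Prod.ext (Fin.ext this.1) (Fin.ext this.2)
    · intro f hf
      have hcard : (univ.filter (fun i => f i = true)).card = 2 := (Finset.mem_filter.1 hf).2
      obtain ⟨a, b, hab, hset⟩ := Finset.card_eq_two.1 hcard
      have hmem : ∀ x : Fin k, f x = true ↔ (x = a ∨ x = b) := by
        intro x
        constructor
        · intro hx
          have : x ∈ univ.filter (fun i => f i = true) := Finset.mem_filter.2 ⟨Finset.mem_univ _, hx⟩
          rw [hset] at this
          simpa using this
        · intro hx
          have : x ∈ ({a, b} : Finset (Fin k)) := by simpa using hx
          rw [← hset] at this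
          exact (Finset.mem_filter.1 this).2
      rcases lt_or_gt_of_ne hab with hlt | hgt
      · refine ⟨(a, b), Finset.mem_filter.2 ⟨Finset.mem_univ _, hlt⟩, ?_⟩
        funext x
        rcases hfx : f x with _ | _
        · simp only [decide_eq_false_iff_not]
          intro hcon
          exact Bool.noConfusion (((hmem x).2 hcon).symm.trans hfx)
        · simp only [decide_eq_true_eq]
          exact (hmem x).1 hfx
      · refine ⟨(b, a), Finset.mem_filter.2 ⟨Finset.mem_univ _, hgt⟩, ?_⟩
        funext x
        rcases hfx : f x with _ | _
        · simp only [decide_eq_false_iff_not]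
          intro hcon
          exact Bool.noConfusion (((hmem x).2 (Or.symm hcon)).symm.trans hfx)
        · simp only [decide_eq_true_eq]
          exact Or.symm ((hmem x).1 hfx)
    · intro p hp
      have hlt : p.1 < p.2 := (Finset.mem_filter.1 hp).2
      rw [htrue p, Finset.prod_pair (ne_of_lt hlt)]
      ring
  rw [hval] at hlim
  exact hlim.congr hfun

/-- The number `C₂` of repeated edges among `k ≥ 2` independent Erdős–Rényi graphs
`G(n, λ_i/n)` converges in distribution, as `n → ∞`, to a Poisson random variable with
mean `γ₂ = (1/2)·∑_{i<j} λ_i·λ_j`. -/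

theorem repeated_edges_poisson (k : ℕ) (hk : 2 ≤ k) (lam : Fin k → ℝ)
    (hlam : ∀ i, 0 < lam i) (m : ℕ) :
    Tendsto (fun n : ℕ => ((colMeasure n k lam) {ω | repeatCount n k ω = m}).toReal)
      atTop
      (nhds (Real.exp (-((1 : ℝ) / 2 *
          ∑ p ∈ Finset.univ.filter (fun p : Fin k × Fin k => p.1 < p.2), lam p.1 * lam p.2)) *
        ((1 : ℝ) / 2 *
          ∑ p ∈ Finset.univ.filter (fun p : Fin k × Fin k => p.1 < p.2), lam p.1 * lam p.2) ^ m /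
        m.factorial)) := by
  classical
  have hgood : ∀ᶠ n : ℕ in atTop, ∀ i, lam i ≤ n :=
    eventually_all.2 fun i => tendsto_natCast_atTop_atTop.eventually_ge_atTop (lam i)
  have hN : Tendsto (fun n : ℕ => ((n.choose 2 : ℕ) : ℝ)) atTop atTop := by
    simp only [Nat.cast_choose_two]
    apply Tendsto.atTop_div_const (by norm_num : (0:ℝ) < 2)
    apply Tendsto.atTop_mul_atTop₀ tendsto_natCast_atTop_atTop
    have := tendsto_atTop_add_const_right atTop (-1 : ℝ) tendsto_natCast_atTop_atTop
    exact this.congr fun n => by ring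
  have h0 : ∀ᶠ n : ℕ in atTop, 0 ≤ edgeP k lam n := by
    filter_upwards [hgood] with n hg
    exact (pq_real n k lam hlam hg).2.2.1
  have h1 : ∀ᶠ n : ℕ in atTop, edgeP k lam n ≤ 1 := by
    filter_upwards [hgood] with n hg
    exact (pq_real n k lam hlam hg).2.2.2
  have hNP := edgeP_limit k lam
  have hb := binom_to_poisson _ (fun n => n.choose 2) (edgeP k lam) m hN h0 h1 hNP
  refine Tendsto.congr' ?_ hb
  filter_upwards [hgood] with n hg
  obtain ⟨hp, hq, hP0, hP1⟩ := pq_real n k lam hlam hg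
  rw [measure_formula n k lam m, hp, hq,
    ENNReal.toReal_mul, ENNReal.toReal_mul, ENNReal.toReal_pow, ENNReal.toReal_pow,
    ENNReal.toReal_natCast, ENNReal.toReal_ofReal hP0, ENNReal.toReal_ofReal (by linarith)]
end

section
/- For k ≥ 3 colors with rates λ_1,…,λ_k ∈ (0,1), define p_{k,ℓ} = ℓ·(k−1)!·∑_{s_1+⋯+s_k=ℓ, s_i≥1} ∏_{i=1}^k (λ_i/Λ)^{s_i} with Λ = λ_1+⋯+λ_k, and γ_ℓ = Λ^ℓ/(2ℓ). Then ∑_{ℓ ≥ k} p_{k,ℓ}·γ_ℓ = ((k−1)!/2)·∏_{i=1}^k λ_i/(1−λ_i). -/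
open Finset
set_option maxHeartbeats 1000000
set_option linter.unnecessarySimpa false

private lemma hasSum_pi_prod : ∀ (n : ℕ) (f : Fin n → ℕ → ℝ) (a : Fin n → ℝ),
    (∀ i m, 0 ≤ f i m) → (∀ i, HasSum (f i) (a i)) →
    HasSum (fun t : Fin n → ℕ => ∏ i, f i (t i)) (∏ i, a i) := by
  intro n
  induction n with
  | zero =>
    intro f a _ _
    have : HasSum (fun t : Fin 0 → ℕ => ∏ i, f i (t i))
        ((fun t : Fin 0 → ℕ => ∏ i, f i (t i)) default) :=
      hasSum_single default (fun b hb => absurd (Subsingleton.elim b default) hb)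
    simpa using this
  | succ n ih =>
    intro f a hnn hs
    have hG : HasSum (fun t : Fin n → ℕ => ∏ i : Fin n, f i.succ (t i)) (∏ i : Fin n, a i.succ) :=
      ih (fun i => f i.succ) (fun i => a i.succ) (fun i m => hnn i.succ m) (fun i => hs i.succ)
    have hsum : Summable (fun p : ℕ × (Fin n → ℕ) => f 0 p.1 * ∏ i : Fin n, f i.succ (p.2 i)) := by
      apply Summable.mul_of_nonneg (hs 0).summable hG.summable
      · exact fun m => hnn 0 m
      · exact fun t => Finset.prod_nonneg fun i _ => hnn i.succ (t i)
    have heq : a 0 * ∏ i : Fin n, a i.succ = ∑' p : ℕ × (Fin n → ℕ), f 0 p.1 * ∏ i : Fin n, f i.succ (p.2 i) :=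
      (hs 0).mul_eq hG hsum.hasSum
    have hP : HasSum (fun p : ℕ × (Fin n → ℕ) => f 0 p.1 * ∏ i : Fin n, f i.succ (p.2 i))
        (a 0 * ∏ i : Fin n, a i.succ) := heq ▸ hsum.hasSum
    have := (Fin.consEquiv (fun _ : Fin (n+1) => ℕ)).hasSum_iff
      (f := fun t : Fin (n+1) → ℕ => ∏ i, f i (t i)) (a := a 0 * ∏ i : Fin n, a i.succ)
    rw [Fin.prod_univ_succ]
    apply this.mp
    convert hP using 1
    funext p
    simp [Fin.consEquiv, Fin.prod_univ_succ]

/-- For `k ≥ 3` colors with rates `λ_1,…,λ_k ∈ (0,1)`, writing `Λ = ∑ λ_i`,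
`p_{k,ℓ} = ℓ·(k−1)!·∑_{s_1+⋯+s_k=ℓ, s_i ≥ 1} ∏ (λ_i/Λ)^{s_i}` and `γ_ℓ = Λ^ℓ/(2ℓ)`,
one has `∑_{ℓ ≥ k} p_{k,ℓ}·γ_ℓ = ((k−1)!/2)·∏ λ_i/(1−λ_i)`. -/
theorem beta_k_formula (k : ℕ) (hk : 3 ≤ k) (lam : Fin k → ℝ)
    (hlam : ∀ i, lam i ∈ Set.Ioo (0 : ℝ) 1) :
    (∑' ℓ : ℕ, if k ≤ ℓ then
        ((ℓ : ℝ) * (k - 1).factorial *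
            ∑ s ∈ (Fintype.piFinset fun _ : Fin k => Finset.range (ℓ + 1)) |>.filter
                (fun s => (∀ i, 1 ≤ s i) ∧ ∑ i, s i = ℓ),
              ∏ i, (lam i / ∑ j, lam j) ^ s i) *
          ((∑ j, lam j) ^ ℓ / (2 * ℓ))
      else 0)
    = (k - 1).factorial / 2 * ∏ i, lam i / (1 - lam i) := by
  classical
  set Λ : ℝ := ∑ j, lam j with hΛdef
  have hΛpos : 0 < Λ := Finset.sum_pos (fun i _ => (hlam i).1) ⟨⟨0, by omega⟩, Finset.mem_univ _⟩
  set F : (Fin k → ℕ) → ℝ := fun t => ∏ i, lam i ^ (t i + 1) with hFdef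
  set T : ℕ → Finset (Fin k → ℕ) := fun ℓ =>
    (Fintype.piFinset fun _ : Fin k => Finset.range (ℓ + 1)).filter
      (fun t => (∑ i, t i) + k = ℓ) with hTdef
  -- geometric series for each color
  have hgeom : ∀ i : Fin k, HasSum (fun n => lam i ^ (n+1)) (lam i / (1 - lam i)) := by
    intro i
    have h := (hasSum_geometric_of_lt_one (hlam i).1.le (hlam i).2).mul_left (lam i)
    have : (fun n => lam i * lam i ^ n) = fun n => lam i ^ (n+1) := by
      funext n; rw [pow_succ, mul_comm]
    rw [this] at h
    rwa [div_eq_mul_inv]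
  have hF : HasSum F (∏ i, lam i / (1 - lam i)) :=
    hasSum_pi_prod k (fun i n => lam i ^ (n+1)) _
      (fun i m => pow_nonneg (hlam i).1.le _) hgeom
  -- fiberwise sum over g t = ∑ t i + k
  have hfib : HasSum (fun ℓ : ℕ => ∑' t : ↑((fun t : Fin k → ℕ => (∑ i, t i) + k) ⁻¹' {ℓ}), F ↑t)
      (∏ i, lam i / (1 - lam i)) := hF.tsum_fiberwise _
  have hsetT : ∀ ℓ : ℕ, ((fun t : Fin k → ℕ => (∑ i, t i) + k) ⁻¹' {ℓ}) = ↑(T ℓ) := by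
    intro ℓ
    ext t
    simp only [Set.mem_preimage, Set.mem_singleton_iff, Finset.coe_filter, Set.mem_setOf_eq,
      Fintype.mem_piFinset, Finset.mem_range, hTdef]
    constructor
    · intro h
      refine ⟨fun i => ?_, h⟩
      have h1 : t i ≤ ∑ j, t j := Finset.single_le_sum (fun j _ => Nat.zero_le _) (Finset.mem_univ i)
      omega
    · exact fun h => h.2
  have hfib' : HasSum (fun ℓ : ℕ => ∑ t ∈ T ℓ, F t) (∏ i, lam i / (1 - lam i)) := by
    convert hfib using 2 with ℓ
    rw [hsetT ℓ]
    exact ((T ℓ).tsum_subtype' F).symm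
  -- multiply by constant
  have hmain : HasSum (fun ℓ : ℕ => ((k-1).factorial : ℝ) / 2 * ∑ t ∈ T ℓ, F t)
      (((k-1).factorial : ℝ) / 2 * ∏ i, lam i / (1 - lam i)) := hfib'.mul_left _
  rw [← hmain.tsum_eq]
  congr 1
  funext ℓ
  by_cases hℓ : k ≤ ℓ
  · rw [if_pos hℓ]
    have hℓpos : 0 < ℓ := lt_of_lt_of_le (by omega) hℓ
    -- bijection between statement finset and T ℓ
    have hbij : (∑ s ∈ (Fintype.piFinset fun _ : Fin k => Finset.range (ℓ + 1)) |>.filter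
          (fun s => (∀ i, 1 ≤ s i) ∧ ∑ i, s i = ℓ), ∏ i, lam i ^ s i)
        = ∑ t ∈ T ℓ, F t := by
      refine Finset.sum_nbij' (fun s => fun i => s i - 1) (fun t => fun i => t i + 1)
        ?_ ?_ ?_ ?_ ?_
      · intro s hs
        simp only [hTdef, Finset.mem_filter, Fintype.mem_piFinset, Finset.mem_range] at hs ⊢
        obtain ⟨hr, h1, hsum⟩ := hs
        refine ⟨fun i => by have := hr i; omega, ?_⟩
        have : ∑ i, (s i - 1 + 1) = ∑ i, s i := by
          apply Finset.sum_congr rfl; intro i _; have := h1 i; omega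
        rw [Finset.sum_add_distrib] at this
        simp only [Finset.sum_const, Finset.card_univ, Fintype.card_fin, smul_eq_mul,
          mul_one] at this
        omega
      · intro t ht
        simp only [hTdef, Finset.mem_filter, Fintype.mem_piFinset, Finset.mem_range] at ht ⊢
        obtain ⟨hr, hsum⟩ := ht
        have hsum' : ∑ i, (t i + 1) = ℓ := by
          rw [Finset.sum_add_distrib]
          simpa using hsum
        refine ⟨fun i => ?_, fun i => by omega, hsum'⟩
        have h1 : t i + 1 ≤ ∑ j, (t j + 1) :=
          Finset.single_le_sum (f := fun j => t j + 1) (fun j _ => Nat.zero_le _)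
            (Finset.mem_univ i)
        omega
      · intro s hs
        simp only [Finset.mem_filter] at hs
        funext i
        dsimp only
        have := hs.2.1 i; omega
      · intro t _; funext i; dsimp only; omega
      · intro s hs
        simp only [Finset.mem_filter] at hs
        apply Finset.prod_congr rfl
        intro i _
        have := hs.2.1 i
        dsimp only
        congr 1
        omega
    -- algebra
    have hinner : (∑ s ∈ (Fintype.piFinset fun _ : Fin k => Finset.range (ℓ + 1)) |>.filter
          (fun s => (∀ i, 1 ≤ s i) ∧ ∑ i, s i = ℓ), ∏ i, (lam i / Λ) ^ s i)
        = (∑ t ∈ T ℓ, F t) / Λ ^ ℓ := by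
      rw [← hbij, Finset.sum_div]
      apply Finset.sum_congr rfl
      intro s hs
      simp only [Finset.mem_filter] at hs
      rw [eq_div_iff (by positivity)]
      calc (∏ i, (lam i / Λ) ^ s i) * Λ ^ ℓ
          = (∏ i, lam i ^ s i / Λ ^ s i) * Λ ^ ℓ := by
            congr 1; apply Finset.prod_congr rfl; intro i _; rw [div_pow]
        _ = ((∏ i, lam i ^ s i) / ∏ i, Λ ^ s i) * Λ ^ ℓ := by rw [Finset.prod_div_distrib]
        _ = ((∏ i, lam i ^ s i) / Λ ^ ℓ) * Λ ^ ℓ := by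
            rw [Finset.prod_pow_eq_pow_sum, hs.2.2]
        _ = ∏ i, lam i ^ s i := by
            field_simp
    rw [hinner]
    have hΛne : Λ ^ ℓ ≠ 0 := by positivity
    have hℓne : (ℓ : ℝ) ≠ 0 := Nat.cast_ne_zero.mpr hℓpos.ne'
    field_simp
  · rw [if_neg hℓ]
    have hT0 : T ℓ = ∅ := by
      apply Finset.eq_empty_of_forall_notMem
      intro t ht
      simp only [hTdef, Finset.mem_filter] at ht
      omega
    rw [hT0]
    simp
end
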